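/- For every oriented forest F, mad_{χ⃗}(F) = |V(F)|: every digraph with dichromatic number at least |V(F)| contains F as a subdigraph (hence a subdivision), and this bound is best possible. -/

import Mathlib

/-
A digraph of dichromatic number at least `k` contains a nonempty vertex set `S` inside which
every vertex has at least `k - 1` out- and `k - 1` in-neighbours: otherwise one can repeatedly
delete a vertex of small out- or in-degree and colour it, when it is put back, with a colour
avoiding all its out-neighbours (resp. in-neighbours); such a vertex lies on no monochromatic
cycle, so this gives an acyclic `(k - 1)`-colouring. An oriented forest on `k` vertices embeds
into `S` greedily, leaf by leaf: the leaf's parent is already placed, and of its at least `k - 1`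
out- or in-neighbours at most `k - 2` are taken. Conversely the complete digraph on `k - 1`
vertices has dichromatic number `k - 1` and is too small to contain a subdivision of the forest.
-/

noncomputable def outDeg {V : Type*} (D : V → V → Prop) (v : V) : ℕ := Nat.card {w // D v w}

noncomputable def inDeg {V : Type*} (D : V → V → Prop) (v : V) : ℕ := Nat.card {w // D w v}

/-- `D` contains a subdivision of `F`: branch vertices are given by an injective map `emb`,
and each arc of `F` is replaced by a directed path in `D` of length at least 1, the paths
being internally disjoint from each other and from the branch vertices. -/
def IsSubdivision {U : Type*} {V : Type*} (F : U → U → Prop) (D : V → V → Prop) : Prop :=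
  ∃ (emb : U → V) (len : U → U → ℕ) (p : U → U → ℕ → V),
    Function.Injective emb ∧
    (∀ u v, F u v → 1 ≤ len u v) ∧
    (∀ u v, F u v → p u v 0 = emb u ∧ p u v (len u v) = emb v) ∧
    (∀ u v, F u v → ∀ i < len u v, D (p u v i) (p u v (i+1))) ∧
    (∀ u v, F u v → ∀ i ≤ len u v, ∀ j ≤ len u v, p u v i = p u v j → i = j) ∧
    (∀ u v, F u v → ∀ i, 0 < i → i < len u v → ∀ w, p u v i ≠ emb w) ∧
    (∀ u v, F u v → ∀ u' v', F u' v' → (u, v) ≠ (u', v') →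
      ∀ i, 0 < i → i < len u v → ∀ j, 0 < j → j < len u' v' → p u v i ≠ p u' v' j)

/-- There is a closed directed walk of positive length all of whose vertices lie in `A`. -/
def HasCycleIn {V : Type*} (D : V → V → Prop) (A : Set V) : Prop :=
  ∃ (n : ℕ) (p : ℕ → V), 1 ≤ n ∧ p n = p 0 ∧ (∀ i < n, D (p i) (p (i+1))) ∧ (∀ i ≤ n, p i ∈ A)

/-- The dichromatic number: least `k` such that the vertices can be coloured with `k` colours
with every colour class inducing an acyclic subdigraph. -/
noncomputable def dichrom {V : Type*} (D : V → V → Prop) : ℕ :=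
  sInf {k : ℕ | ∃ c : V → Fin k, ∀ i : Fin k, ¬ HasCycleIn D {v | c v = i}}

/-- The set of integers `c` such that every (finite, loopless) digraph with dichromatic
number at least `c` contains a subdivision of `F`. -/
def ChiMadSet {U : Type} (F : U → U → Prop) : Set ℕ :=
  {c | ∀ (V : Type) [Fintype V] (D : V → V → Prop), Irreflexive D →
    c ≤ dichrom D → IsSubdivision F D}

open Finset SimpleGraph Function
open scoped Classical

section Dicoloring

variable {V : Type*} {D : V → V → Prop}

theorem HasCycleIn.mono {A B : Set V} (h : HasCycleIn D A) (hAB : A ⊆ B) : HasCycleIn D B := by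
  obtain ⟨n, p, hn, hp, hD, hA⟩ := h
  exact ⟨n, p, hn, hp, hD, fun i hi => hAB (hA i hi)⟩

theorem HasCycleIn.reverse {A : Set V} (h : HasCycleIn D A) : HasCycleIn (flip D) A := by
  obtain ⟨n, p, hn, hp, hD, hA⟩ := h
  refine ⟨n, fun i => p (n - i), hn, by simp [hp], fun i hi => ?_, fun i _ => hA _ (by omega)⟩
  have := hD (n - (i + 1)) (by omega)
  rwa [show n - (i + 1) + 1 = n - i by omega] at this

theorem HasCycleIn.diff_singleton_or_exists_rel {A : Set V} (h : HasCycleIn D A) (x : V) :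
    HasCycleIn D (A \ {x}) ∨ x ∈ A ∧ ∃ y ∈ A, D x y := by
  obtain ⟨n, p, hn, hp, hD, hA⟩ := h
  by_cases hx : ∃ i < n, p i = x
  · obtain ⟨i, hi, rfl⟩ := hx
    exact Or.inr ⟨hA i hi.le, p (i + 1), hA _ hi, hD i hi⟩
  · push Not at hx
    refine Or.inl ⟨n, p, hn, hp, hD, fun i hi => ⟨hA i hi, ?_⟩⟩
    rcases hi.lt_or_eq with hi | rfl
    · exact hx i hi
    · rw [hp]
      exact hx 0 hn

theorem hasCycleIn_ne_iff {A : Set V} : HasCycleIn (fun a b : V => a ≠ b) A ↔ A.Nontrivial := by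
  constructor
  · rintro ⟨n, p, hn, -, hD, hA⟩
    exact ⟨p 0, hA 0 (Nat.zero_le n), p 1, hA 1 hn, hD 0 hn⟩
  · rintro ⟨a, ha, b, hb, hab⟩
    refine ⟨2, fun i => if i = 1 then b else a, by norm_num, rfl, fun i hi => ?_, fun i _ => ?_⟩
    · interval_cases i <;> simp [hab, Ne.symm hab]
    · dsimp only
      split_ifs <;> assumption

/-- Colours are natural numbers, constrained only on `S`, so that a colouring of a subset can
be modified at a single new vertex with `Function.update`. -/
def IsDicoloring (D : V → V → Prop) (S : Set V) (n : ℕ) (c : V → ℕ) : Prop :=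
  (∀ v ∈ S, c v < n) ∧ ∀ i, ¬HasCycleIn D {v | v ∈ S ∧ c v = i}

theorem IsDicoloring.reverse {S : Set V} {n : ℕ} {c : V → ℕ} (hc : IsDicoloring D S n c) :
    IsDicoloring (flip D) S n c :=
  ⟨hc.1, fun i hi => hc.2 i hi.reverse⟩

theorem IsDicoloring.exists_insert (hD : Irreflexive D) {S : Finset V} {n : ℕ} {c : V → ℕ}
    (hc : IsDicoloring D S n c) {x : V} (hx : #{y ∈ S | D x y} < n) :
    ∃ c', IsDicoloring D ↑(insert x S) n c' := by
  obtain ⟨i₀, hi₀, hfree⟩ : ∃ i₀ ∈ range n, i₀ ∉ image c {y ∈ S | D x y} :=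
    exists_mem_notMem_of_card_lt_card (by rw [card_range]; exact card_image_le.trans_lt hx)
  refine ⟨update c x i₀, fun v hv => ?_, fun i hcyc => ?_⟩
  · rcases eq_or_ne v x with rfl | hvx
    · simpa using hi₀
    · rw [update_of_ne hvx]
      exact hc.1 v (by simpa [hvx] using hv)
  · rcases hcyc.diff_singleton_or_exists_rel x with hcyc | ⟨⟨-, hxi⟩, y, ⟨hyS, hyi⟩, hxy⟩
    · refine hc.2 i (hcyc.mono ?_)
      rintro v ⟨⟨hv, hvi⟩, hvx : v ≠ x⟩
      rw [update_of_ne hvx] at hvi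
      exact ⟨by simpa [hvx] using hv, hvi⟩
    · have hyx : y ≠ x := fun h => hD x (h ▸ hxy)
      rw [update_self] at hxi
      rw [update_of_ne hyx, ← hxi] at hyi
      exact hfree (mem_image.2 ⟨y, mem_filter.2 ⟨by simpa [hyx] using hyS, hxy⟩, hyi⟩)

def IsDegenerate (D : V → V → Prop) (n : ℕ) : Prop :=
  ∀ S : Finset V, S.Nonempty → ∃ x ∈ S, #{y ∈ S | D x y} < n ∨ #{y ∈ S | D y x} < n

theorem IsDegenerate.exists_dicoloring (hD : Irreflexive D) {n : ℕ} (h : IsDegenerate D n)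
    (S : Finset V) : ∃ c, IsDicoloring D S n c := by
  induction S using Finset.strongInduction with
  | H S ih =>
  rcases S.eq_empty_or_nonempty with rfl | hS
  · exact ⟨0, by simp, fun i ⟨_, _, _, _, _, hp⟩ => by simpa using (hp 0 (Nat.zero_le _)).1⟩
  obtain ⟨x, hx, hdeg⟩ := h S hS
  obtain ⟨c, hc⟩ := ih (S.erase x) (erase_ssubset hx)
  have hle (P : V → Prop) : #{y ∈ S.erase x | P y} ≤ #{y ∈ S | P y} :=
    card_le_card (filter_subset_filter _ (erase_subset x S))
  rw [← insert_erase hx]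
  rcases hdeg with hdeg | hdeg
  · exact hc.exists_insert hD ((hle _).trans_lt hdeg)
  · obtain ⟨c', hc'⟩ :=
      IsDicoloring.exists_insert (D := flip D) hD hc.reverse ((hle (D · x)).trans_lt hdeg)
    exact ⟨c', hc'.reverse⟩

theorem IsDegenerate.dichrom_le [Fintype V] (hD : Irreflexive D) {n : ℕ} (h : IsDegenerate D n) :
    dichrom D ≤ n := by
  obtain ⟨c, hc_lt, hc⟩ := h.exists_dicoloring hD univ
  refine Nat.sInf_le ⟨fun v => ⟨c v, hc_lt v (by simp)⟩, fun i hi => hc i (hi.mono ?_)⟩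
  intro v hv
  exact ⟨by simp, congrArg Fin.val hv⟩

theorem exists_minDegree_ge_of_lt_dichrom [Fintype V] (hD : Irreflexive D) {k : ℕ}
    (hk : k < dichrom D) :
    ∃ S : Finset V, S.Nonempty ∧ ∀ x ∈ S, k ≤ #{y ∈ S | D x y} ∧ k ≤ #{y ∈ S | D y x} := by
  by_contra! h
  refine hk.not_ge (IsDegenerate.dichrom_le hD fun S hS => ?_)
  obtain ⟨x, hx, hdeg⟩ := h S hS
  exact ⟨x, hx, by omega⟩

theorem dichrom_ne_eq_card [Fintype V] : dichrom (fun a b : V => a ≠ b) = Fintype.card V := by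
  have hset : {k | ∃ c : V → Fin k, ∀ i, ¬HasCycleIn (fun a b : V => a ≠ b) {v | c v = i}} =
      Set.Ici (Fintype.card V) := by
    ext k
    simp only [hasCycleIn_ne_iff, Set.not_nontrivial_iff, Set.mem_Ici, Set.mem_ofPred_eq]
    constructor
    · rintro ⟨c, hc⟩
      simpa using Fintype.card_le_of_injective c fun a b h => hc (c b) h rfl
    · intro h
      obtain ⟨f⟩ := Function.Embedding.nonempty_of_card_le (α := V) (β := Fin k) (by simpa using h)
      exact ⟨f, fun i a ha b hb => f.injective (ha.trans hb.symm)⟩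
  rw [dichrom, hset, csInf_Ici]

end Dicoloring

theorem SimpleGraph.IsAcyclic.exists_neighborSet_subsingleton {U : Type*} [Nonempty U]
    {G : SimpleGraph U} [Finite G.edgeSet] (hG : G.IsAcyclic) :
    ∃ u, (G.neighborSet u).Subsingleton := by
  obtain ⟨u, v, p, hp, hmax⟩ := Walk.exists_isPath_forall_isPath_length_le_length G
  suffices h : ∀ w, G.Adj u w → w = p.snd from ⟨u, fun a ha b hb => (h a ha).trans (h b hb).symm⟩
  refine fun w hw => hG.eq_snd_of_adj_start hp hw (not_not.1 fun hw' => ?_)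
  simpa using hmax _ _ _ (hp.cons hw' (h := hw.symm))

section Forest

variable {U V : Type*}

structure IsOrientedForest (F : U → U → Prop) : Prop where
  irrefl : Irreflexive F
  antisymm : ∀ a b, ¬(F a b ∧ F b a)
  acyclic : (fromRel F).IsAcyclic

theorem IsOrientedForest.comap {W : Type*} {F : U → U → Prop} (hF : IsOrientedForest F)
    {f : W → U} (hf : Injective f) : IsOrientedForest (fun a b => F (f a) (f b)) where
  irrefl a := hF.irrefl (f a)
  antisymm a b := hF.antisymm (f a) (f b)
  acyclic := hF.acyclic.comap ⟨f, fun h => (fromRel_adj _ _ _).2 ⟨hf.ne h.1, h.2⟩⟩ hf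

variable {D : V → V → Prop}

theorem exists_rel_notMem_of_card_le (hD : Irreflexive D) {S R : Finset V} {x : V} {k : ℕ}
    (hxR : x ∈ R) (hR : #R ≤ k) (hx : k ≤ #{y ∈ S | D x y}) : ∃ y ∈ S, y ∉ R ∧ D x y := by
  have hlt : #(R.erase x) < #{y ∈ S | D x y} := by
    have := card_pos.2 ⟨x, hxR⟩
    rw [card_erase_of_mem hxR]
    omega
  obtain ⟨y, hy, hyR⟩ := exists_mem_notMem_of_card_lt_card hlt
  rw [mem_filter] at hy
  exact ⟨y, hy.1, fun h => hyR (mem_erase.2 ⟨fun hyx => hD x (hyx ▸ hy.2), h⟩), hy.2⟩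

theorem IsOrientedForest.exists_vertex_for_leaf {F : U → U → Prop} (hF : IsOrientedForest F)
    (hD : Irreflexive D) {u : U} (hu : ((fromRel F).neighborSet u).Subsingleton)
    {k : ℕ} {S : Finset V} (hS : S.Nonempty) (hout : ∀ x ∈ S, k ≤ #{y ∈ S | D x y})
    (hin : ∀ x ∈ S, k ≤ #{y ∈ S | D y x}) {R : Finset V} (hRS : R ⊆ S) (hR : #R ≤ k)
    (emb : {a // a ≠ u} → V) (hemb : ∀ a, emb a ∈ R) :
    ∃ y ∈ S, y ∉ R ∧ ∀ b (hb : b ≠ u),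
      (F u b → D y (emb ⟨b, hb⟩)) ∧ (F b u → D (emb ⟨b, hb⟩) y) := by
  by_cases hw : ∃ w, (fromRel F).Adj u w
  · obtain ⟨w, huw⟩ := hw
    have hwu : w ≠ u := huw.ne.symm
    have hx := hRS (hemb ⟨w, hwu⟩)
    have heq (b : U) (hb : b ≠ u) (h : F u b ∨ F b u) : b = w :=
      hu ((fromRel_adj _ _ _).2 ⟨hb.symm, h⟩) huw
    rcases ((fromRel_adj _ _ _).1 huw).2 with hF_uw | hF_wu
    · obtain ⟨y, hyS, hyR, hyx⟩ :=
        exists_rel_notMem_of_card_le (D := flip D) hD (hemb _) hR (hin _ hx)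
      refine ⟨y, hyS, hyR, fun b hb => ⟨fun h => ?_, fun h => ?_⟩⟩
      · obtain rfl := heq b hb (Or.inl h)
        exact hyx
      · obtain rfl := heq b hb (Or.inr h)
        exact (hF.antisymm _ _ ⟨hF_uw, h⟩).elim
    · obtain ⟨y, hyS, hyR, hxy⟩ := exists_rel_notMem_of_card_le hD (hemb _) hR (hout _ hx)
      refine ⟨y, hyS, hyR, fun b hb => ⟨fun h => ?_, fun h => ?_⟩⟩
      · obtain rfl := heq b hb (Or.inl h)
        exact (hF.antisymm _ _ ⟨h, hF_wu⟩).elim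
      · obtain rfl := heq b hb (Or.inr h)
        exact hxy
  · push Not at hw
    have hnot (b : U) (hb : b ≠ u) : ¬(F u b ∨ F b u) := fun h =>
      hw b ((fromRel_adj _ _ _).2 ⟨hb.symm, h⟩)
    obtain ⟨x, hx⟩ := hS
    obtain ⟨y, hyS, hyR⟩ : ∃ y ∈ S, y ∉ R := by
      by_cases hxR : x ∈ R
      · obtain ⟨y, hyS, hyR, -⟩ := exists_rel_notMem_of_card_le hD hxR hR (hout x hx)
        exact ⟨y, hyS, hyR⟩
      · exact ⟨x, hx, hxR⟩
    exact ⟨y, hyS, hyR, fun b hb => ⟨fun h => (hnot b hb (Or.inl h)).elim,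
      fun h => (hnot b hb (Or.inr h)).elim⟩⟩

theorem exists_injective_hom_extend {F : U → U → Prop} (hF : Irreflexive F) {u : U}
    {emb : {a // a ≠ u} → V} (hinj : Injective emb)
    (harc : ∀ a b : {a // a ≠ u}, F a b → D (emb a) (emb b)) {y : V} (hy : ∀ a, emb a ≠ y)
    (hyarc : ∀ b (hb : b ≠ u), (F u b → D y (emb ⟨b, hb⟩)) ∧ (F b u → D (emb ⟨b, hb⟩) y))
    {S : Set V} (hyS : y ∈ S) (hS : ∀ a, emb a ∈ S) :
    ∃ emb' : U → V, Injective emb' ∧ (∀ a, emb' a ∈ S) ∧ ∀ a b, F a b → D (emb' a) (emb' b) := by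
  refine ⟨fun a => if h : a = u then y else emb ⟨a, h⟩, fun a b hab => ?_, fun a => ?_,
    fun a b hab => ?_⟩
  · by_cases ha : a = u <;> by_cases hb : b = u <;> simp only [ha, hb, dite_true, dite_false] at hab
    · exact ha.trans hb.symm
    · exact (hy _ hab.symm).elim
    · exact (hy _ hab).elim
    · exact congrArg Subtype.val (hinj hab)
  · dsimp only
    split_ifs
    exacts [hyS, hS _]
  · by_cases ha : a = u <;> by_cases hb : b = u
    · subst ha hb
      exact (hF _ hab).elim
    · subst ha
      simpa [hb] using (hyarc b hb).1 hab
    · subst hb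
      simpa [ha] using (hyarc a ha).2 hab
    · simpa [ha, hb] using harc ⟨a, ha⟩ ⟨b, hb⟩ hab

theorem IsOrientedForest.exists_embedding [Fintype U] {F : U → U → Prop}
    (hF : IsOrientedForest F) (hD : Irreflexive D) {k : ℕ} (hU : Fintype.card U ≤ k + 1)
    {S : Finset V} (hS : S.Nonempty) (hout : ∀ x ∈ S, k ≤ #{y ∈ S | D x y})
    (hin : ∀ x ∈ S, k ≤ #{y ∈ S | D y x}) :
    ∃ emb : U → V, Injective emb ∧ (∀ a, emb a ∈ S) ∧ ∀ a b, F a b → D (emb a) (emb b) := by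
  induction hn : Fintype.card U generalizing U with
  | zero =>
    have := Fintype.card_eq_zero_iff.mp hn
    exact ⟨isEmptyElim, fun a => isEmptyElim a, isEmptyElim, isEmptyElim⟩
  | succ n ih =>
    have : Nonempty U := Fintype.card_pos_iff.mp (by omega)
    obtain ⟨u, hu⟩ := hF.acyclic.exists_neighborSet_subsingleton
    have hcard : Fintype.card {a // a ≠ u} = n := by
      rw [Fintype.card_subtype_compl, Fintype.card_subtype_eq, hn, Nat.add_sub_cancel]
    obtain ⟨emb, hinj, hembS, harc⟩ := ih (hF.comap Subtype.val_injective) (by omega) hcard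
    have hR : #(univ.image emb) ≤ k := card_image_le.trans (by rw [card_univ]; omega)
    obtain ⟨y, hyS, hyR, hyarc⟩ := hF.exists_vertex_for_leaf hD hu hS hout hin
      (fun y hy => by obtain ⟨a, -, rfl⟩ := mem_image.1 hy; exact hembS a) hR emb
      (fun a => mem_image_of_mem emb (mem_univ a))
    exact exists_injective_hom_extend hF.irrefl hinj harc
      (fun a h => hyR (mem_image.2 ⟨a, mem_univ a, h⟩)) hyarc (S := S) hyS hembS

end Forest

theorem isSubdivision_of_injective {U V : Type*} {F : U → U → Prop} {D : V → V → Prop}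
    (hD : Irreflexive D) {emb : U → V} (hinj : Injective emb)
    (harc : ∀ a b, F a b → D (emb a) (emb b)) : IsSubdivision F D := by
  refine ⟨emb, fun _ _ => 1, fun a b i => if i = 0 then emb a else emb b, hinj,
    fun _ _ _ => le_rfl, fun _ _ _ => ⟨rfl, rfl⟩, fun a b hab i hi => ?_,
    fun a b hab i hi j hj hij => ?_, fun _ _ _ i _ hi => by dsimp only at hi; omega,
    fun _ _ _ _ _ _ _ i _ hi => by dsimp only at hi; omega⟩
  · obtain rfl : i = 0 := Nat.lt_one_iff.1 hi
    simpa using harc a b hab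
  · dsimp only at hi hj hij
    have hne : emb a ≠ emb b := fun h => hD _ (h ▸ harc a b hab)
    interval_cases i <;> interval_cases j <;> simp_all

theorem IsSubdivision.card_le {U V : Type*} [Fintype U] [Fintype V] {F : U → U → Prop}
    {D : V → V → Prop} (h : IsSubdivision F D) : Fintype.card U ≤ Fintype.card V := by
  obtain ⟨emb, -, -, hinj, -⟩ := h
  exact Fintype.card_le_of_injective emb hinj

/-- For an oriented forest `F` (an orientation of an undirected forest),
`mad_{χ⃗}(F) = |V(F)|`: every digraph with dichromatic number at least `|V(F)|` contains
`F` as a subdigraph (hence as a subdivision), and this bound is best possible. -/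
theorem stmt17 (U : Type) [Fintype U] (F : U → U → Prop)
    (hirr : Irreflexive F) (hanti : ∀ a b, ¬(F a b ∧ F b a))
    (hforest : (SimpleGraph.fromRel F).IsAcyclic) :
    (∀ (V : Type) [Fintype V] (D : V → V → Prop), Irreflexive D →
      Fintype.card U ≤ dichrom D →
      ∃ emb : U → V, Function.Injective emb ∧ ∀ a b, F a b → D (emb a) (emb b)) ∧
    IsLeast (ChiMadSet F) (Fintype.card U) := by
  have hF : IsOrientedForest F := ⟨hirr, hanti, hforest⟩
  have hembed : ∀ (V : Type) [Fintype V] (D : V → V → Prop), Irreflexive D →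
      Fintype.card U ≤ dichrom D →
      ∃ emb : U → V, Function.Injective emb ∧ ∀ a b, F a b → D (emb a) (emb b) := by
    intro V _ D hD hχ
    cases isEmpty_or_nonempty U
    · exact ⟨isEmptyElim, fun a => isEmptyElim a, fun a => isEmptyElim a⟩
    have hpos := Fintype.card_pos (α := U)
    obtain ⟨S, hS, hdeg⟩ :=
      exists_minDegree_ge_of_lt_dichrom hD (k := Fintype.card U - 1) (by omega)
    obtain ⟨emb, hinj, -, harc⟩ := hF.exists_embedding hD (by omega) hS
      (fun x hx => (hdeg x hx).1) (fun x hx => (hdeg x hx).2)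
    exact ⟨emb, hinj, harc⟩
  refine ⟨hembed, fun V _ D hD hχ => ?_, fun k hk => ?_⟩
  · obtain ⟨emb, hinj, harc⟩ := hembed V D hD hχ
    exact isSubdivision_of_injective hD hinj harc
  · by_contra! hlt
    have := (hk (Fin (Fintype.card U - 1)) (· ≠ ·) (fun _ h => h rfl)
      (by rw [dichrom_ne_eq_card, Fintype.card_fin]; omega)).card_le
    rw [Fintype.card_fin] at this
    omega
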